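/- Let X ⊆ W be a set of segments. If cl(X) is the disjoint union of two components Y_1 and Y_2, then X can be partitioned into X_1 ∪ X_2 with cl(X_i) = Y_i for i = 1,2. -/

import Mathlib

variable {V W : Type*}

/-- The incidence graph of a bipartite constraint graph given by neighborhoods `N`. -/
def biGraph (N : V → Set W) : SimpleGraph (V ⊕ W) :=
  SimpleGraph.fromRel (fun a b =>
    match a, b with
    | Sum.inl v, Sum.inr w => w ∈ N v
    | _, _ => False)

/-- The attractor of a set of segments. -/
def attractor (N : V → Set W) (X : Set W) : Set W :=
  X ∪ ⋃ v ∈ {v : V | (N v \ X).ncard ≤ 1}, N v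

/-- A set of segments is closed if it equals its attractor. -/
def IsClosedSeg (N : V → Set W) (X : Set W) : Prop := attractor N X = X

/-- The closure of a set of segments: the minimal closed superset. -/
def clW (N : V → Set W) (X : Set W) : Set W := ⋂₀ {Y | X ⊆ Y ∧ IsClosedSeg N Y}

/-- `G` is `k`-meager. -/
def Meager (N : V → Set W) (k : ℕ) : Prop :=
  ∀ X : Set W, X.ncard ≤ 2 * k → {v : V | N v ⊆ X}.ncard ≤ 2 * X.ncard

/-- `X` is `k`-scattered: distinct segments of `X` have pairwise distance at least `2k`. -/
def Scattered (N : V → Set W) (k : ℕ) (X : Set W) : Prop :=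
  ∀ u ∈ X, ∀ w ∈ X, u ≠ w →
    ((2 * k : ℕ) : ℕ∞) ≤ (biGraph N).edist (Sum.inr u) (Sum.inr w)

/-- The vertices of the feet-induced subgraph on a set `X` of segments:
all segments of `X` and all constraint vertices all whose neighbors lie in `X`. -/
def footVerts (N : V → Set W) (X : Set W) : Set (V ⊕ W) :=
  Sum.inr '' X ∪ Sum.inl '' {v | N v ⊆ X}

/-- `Y` is a component of `X`: the feet-induced subgraph on `Y` is a connected
component of the feet-induced subgraph on `X`. -/
def IsComponent (N : V → Set W) (X Y : Set W) : Prop :=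
  Y ⊆ X ∧
  ∃ C : ((biGraph N).induce (footVerts N X)).ConnectedComponent,
    footVerts N Y =
      Subtype.val '' {a | ((biGraph N).induce (footVerts N X)).connectedComponentMk a = C}

lemma isClosedSeg_iff' (N : V → Set W) (Y : Set W) :
    IsClosedSeg N Y ↔ ∀ v, (N v \ Y).ncard ≤ 1 → N v ⊆ Y := by
  constructor
  · intro h v hv
    have : N v ⊆ attractor N Y := by
      apply Set.subset_union_of_subset_right
      exact Set.subset_biUnion_of_mem (u := N) hv
    rwa [h] at this
  · intro h
    apply Set.union_eq_self_of_subset_right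
    exact Set.iUnion₂_subset h

lemma subset_clW (N : V → Set W) (X : Set W) : X ⊆ clW N X :=
  Set.subset_sInter fun _ hY => hY.1

lemma clW_subset (N : V → Set W) {X Y : Set W} (hXY : X ⊆ Y) (hY : IsClosedSeg N Y) :
    clW N X ⊆ Y := Set.sInter_subset_of_mem ⟨hXY, hY⟩

lemma clW_isClosed (N : V → Set W) (hfin : ∀ v, (N v).Finite) (X : Set W) :
    IsClosedSeg N (clW N X) := by
  rw [isClosedSeg_iff']
  intro v hv
  apply Set.subset_sInter
  rintro Y ⟨hXY, hY⟩
  refine (isClosedSeg_iff' N Y).mp hY v ?_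
  refine le_trans (Set.ncard_le_ncard ?_ (hfin v).diff) hv
  exact Set.diff_subset_diff_right (Set.sInter_subset_of_mem ⟨hXY, hY⟩)

lemma finite_of_ncard_three (N : V → Set W) (hdeg : ∀ v, (N v).ncard = 3) (v : V) :
    (N v).Finite := by
  by_contra h
  have : (N v).ncard = 0 := Set.Infinite.ncard h
  rw [hdeg v] at this
  exact three_ne_zero this

lemma component_absorb (N : V → Set W) {Z Y : Set W} (hY : IsComponent N Z Y)
    {v : V} (hNv : N v ⊆ Z) {w : W} (hw : w ∈ N v) (hwY : w ∈ Y) : N v ⊆ Y := by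
  obtain ⟨hYZ, C, hC⟩ := hY
  have ha : Sum.inl v ∈ footVerts N Z := Or.inr ⟨v, hNv, rfl⟩
  have hb : Sum.inr w ∈ footVerts N Z := Or.inl ⟨w, hYZ hwY, rfl⟩
  have hadj : ((biGraph N).induce (footVerts N Z)).Adj ⟨Sum.inl v, ha⟩ ⟨Sum.inr w, hb⟩ := by
    show (biGraph N).Adj (Sum.inl v) (Sum.inr w)
    rw [biGraph, SimpleGraph.fromRel_adj]
    exact ⟨by simp, Or.inl hw⟩
  have hbY : Sum.inr w ∈ footVerts N Y := Or.inl ⟨w, hwY, rfl⟩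
  rw [hC] at hbY
  obtain ⟨c, hcC, hcval⟩ := hbY
  have hcb : c = ⟨Sum.inr w, hb⟩ := Subtype.ext hcval
  have : ((biGraph N).induce (footVerts N Z)).connectedComponentMk ⟨Sum.inl v, ha⟩ = C := by
    rw [SimpleGraph.ConnectedComponent.sound hadj.reachable, ← hcC, hcb]
  have haY : Sum.inl v ∈ footVerts N Y := by
    rw [hC]; exact ⟨⟨Sum.inl v, ha⟩, this, rfl⟩
  rcases haY with ⟨w', _, hw'⟩ | ⟨v', hv', hv'eq⟩
  · exact absurd hw' (by simp)
  · obtain rfl : v' = v := Sum.inl.inj hv'eq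
    exact hv'

lemma clW_inter_component (N : V → Set W) (hdeg : ∀ v, (N v).ncard = 3)
    (X Y₁ Y₂ : Set W)
    (hdisj : Disjoint Y₁ Y₂) (hunion : clW N X = Y₁ ∪ Y₂)
    (h1 : IsComponent N (clW N X) Y₁) (h2 : IsComponent N (clW N X) Y₂) :
    clW N (X ∩ Y₁) = Y₁ := by
  have hfin := finite_of_ncard_three N hdeg
  have hclosed : IsClosedSeg N (clW N X) := clW_isClosed N hfin X
  have hXsub : X ⊆ Y₁ ∪ Y₂ := hunion ▸ subset_clW N X
  have hmem : ∀ v : V, (N v \ (Y₁ ∪ Y₂)).ncard ≤ 1 → N v ⊆ Y₁ ∪ Y₂ := by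
    intro v hv
    have := (isClosedSeg_iff' N (clW N X)).mp hclosed v (by rw [hunion]; exact hv)
    rwa [hunion] at this
  have habs1 : ∀ v : V, N v ⊆ Y₁ ∪ Y₂ → (∃ w ∈ N v, w ∈ Y₁) → N v ⊆ Y₁ := by
    rintro v h ⟨w, hw, hwY⟩
    exact component_absorb N h1 (by rw [hunion]; exact h) hw hwY
  have habs2 : ∀ v : V, N v ⊆ Y₁ ∪ Y₂ → (∃ w ∈ N v, w ∈ Y₂) → N v ⊆ Y₂ := by
    rintro v h ⟨w, hw, hwY⟩
    exact component_absorb N h2 (by rw [hunion]; exact h) hw hwY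
  -- Y₁ is closed
  have hY1closed : IsClosedSeg N Y₁ := by
    rw [isClosedSeg_iff']
    intro v hv
    have hsub : N v ⊆ Y₁ ∪ Y₂ := hmem v (le_trans (Set.ncard_le_ncard
      (Set.diff_subset_diff_right Set.subset_union_left) (hfin v).diff) hv)
    refine habs1 v hsub ?_
    by_contra h
    push_neg at h
    have hEq : N v \ Y₁ = N v := by
      ext x
      exact ⟨fun hx => hx.1, fun hx => ⟨hx, fun h1 => h x hx h1⟩⟩
    rw [hEq, hdeg v] at hv
    omega
  have hcl1 : clW N (X ∩ Y₁) ⊆ Y₁ := clW_subset N Set.inter_subset_right hY1closed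
  -- clW N (X ∩ Y₁) ∪ Y₂ is closed
  have hU1closed : IsClosedSeg N (clW N (X ∩ Y₁) ∪ Y₂) := by
    rw [isClosedSeg_iff']
    intro v hv
    have hsub : N v ⊆ Y₁ ∪ Y₂ := hmem v (le_trans (Set.ncard_le_ncard
      (Set.diff_subset_diff_right (Set.union_subset_union_left Y₂ hcl1)) (hfin v).diff) hv)
    by_cases hw : ∃ w ∈ N v, w ∈ Y₁
    · have hNv1 : N v ⊆ Y₁ := habs1 v hsub hw
      have hdiff : N v \ clW N (X ∩ Y₁) ⊆ N v \ (clW N (X ∩ Y₁) ∪ Y₂) := by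
        rintro x ⟨hx1, hx2⟩
        refine ⟨hx1, ?_⟩
        rintro (h | h)
        · exact hx2 h
        · exact hdisj.le_bot ⟨hNv1 hx1, h⟩
      have : (N v \ clW N (X ∩ Y₁)).ncard ≤ 1 :=
        le_trans (Set.ncard_le_ncard hdiff (hfin v).diff) hv
      have := (isClosedSeg_iff' N (clW N (X ∩ Y₁))).mp (clW_isClosed N hfin _) v this
      exact this.trans Set.subset_union_left
    · push_neg at hw
      refine Set.Subset.trans ?_ Set.subset_union_right
      intro x hx
      rcases hsub hx with h | h
      · exact (hw x hx h).elim
      · exact h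
  -- Y₁ ⊆ clW N (X ∩ Y₁)
  have hback : Y₁ ⊆ clW N (X ∩ Y₁) := by
    have hXsub' : X ⊆ clW N (X ∩ Y₁) ∪ Y₂ := by
      intro x hx
      rcases hXsub hx with h | h
      · exact Or.inl (subset_clW N _ ⟨hx, h⟩)
      · exact Or.inr h
    have := clW_subset N hXsub' hU1closed
    rw [hunion] at this
    intro y hy
    rcases this (Or.inl hy) with h | h
    · exact h
    · exact (hdisj.le_bot ⟨hy, h⟩).elim
  exact Set.Subset.antisymm hcl1 hback

/-- If `cl(X)` is the disjoint union of two components `Y₁` and `Y₂`,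
then `X` can be partitioned into `X₁ ∪ X₂` with `cl(Xᵢ) = Yᵢ`. -/
theorem closure_components_partition {V W : Type*}
    (N : V → Set W) (hdeg : ∀ v, (N v).ncard = 3)
    (X Y₁ Y₂ : Set W)
    (hdisj : Disjoint Y₁ Y₂) (hunion : clW N X = Y₁ ∪ Y₂)
    (h1 : IsComponent N (clW N X) Y₁) (h2 : IsComponent N (clW N X) Y₂) :
    ∃ X₁ X₂ : Set W, X₁ ∪ X₂ = X ∧ Disjoint X₁ X₂ ∧
      clW N X₁ = Y₁ ∧ clW N X₂ = Y₂ := by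
  refine ⟨X ∩ Y₁, X ∩ Y₂, ?_, ?_, ?_, ?_⟩
  · rw [← Set.inter_union_distrib_left]
    exact Set.inter_eq_left.mpr (hunion ▸ subset_clW N X)
  · exact hdisj.mono Set.inter_subset_right Set.inter_subset_right
  · exact clW_inter_component N hdeg X Y₁ Y₂ hdisj hunion h1 h2
  · exact clW_inter_component N hdeg X Y₂ Y₁ hdisj.symm
      (by rw [hunion, Set.union_comm]) h2 h1
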